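/- arXiv:2307.06603 — 6 statements merged into one kernel-verified Lean document; each statement's English description precedes it below -/
import Mathlib

section
/- Let K be a field with characteristic different from 3 and let c ∈ K with c ≠ 0. Define K-linear maps M₁, M₂ : K⁴ → K² by the matrices M₁ = [[c, -2c, c, c], [-c, -c, 2c, -c]] and M₂ = [[c, c, -2c, c], [2c, -c, -c, 2c]]. Then the joint kernel ker M₁ ∩ ker M₂ is the two-dimensional subspace of K⁴ spanned by the vectors (-1, 1, 1, 2) and (2, 1, 1, -1). -/
/-- The matrices of the Dunkl operators `D_{y₁-y₂}` and `D_{y₂-y₃}` of the rational Cherednik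
algebra `H_{0,c}(S₃,𝔥)` on the degree-1 part of the Verma module `M_{0,c}(Stand)`:
for `char K ≠ 3` and `c ≠ 0`, the joint kernel is the 2-dimensional space of singular vectors
spanned by `(-1,1,1,2)` and `(2,1,1,-1)`. -/
theorem stmt_5 (K : Type*) [Field K] (hchar : ringChar K ≠ 3) (c : K) (hc : c ≠ 0) :
    (LinearMap.ker (Matrix.toLin'
        (!![c, -2*c, c, c; -c, -c, 2*c, -c] : Matrix (Fin 2) (Fin 4) K)) ⊓
      LinearMap.ker (Matrix.toLin'
        (!![c, c, -2*c, c; 2*c, -c, -c, 2*c] : Matrix (Fin 2) (Fin 4) K))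
      = Submodule.span K {![(-1 : K), 1, 1, 2], ![(2 : K), 1, 1, -1]}) ∧
    LinearIndependent K ![![(-1 : K), 1, 1, 2], ![(2 : K), 1, 1, -1]] := by
  have h3 : (3 : K) ≠ 0 := by
    intro h
    exact hchar (CharP.ringChar_of_prime_eq_zero (by norm_num) (by exact_mod_cast h))
  constructor
  · ext x
    simp only [Submodule.mem_inf, LinearMap.mem_ker, Submodule.mem_span_pair]
    constructor
    · rintro ⟨h1, h2⟩
      have e0 := congrFun h1 0
      have f0 := congrFun h2 0
      simp [Matrix.toLin'_apply, Matrix.mulVec, dotProduct, Fin.sum_univ_four] at e0 f0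
      have hA : x 0 - 2 * x 1 + x 2 + x 3 = 0 :=
        mul_left_cancel₀ hc (by rw [mul_zero]; linear_combination e0)
      have hB : x 0 + x 1 - 2 * x 2 + x 3 = 0 :=
        mul_left_cancel₀ hc (by rw [mul_zero]; linear_combination f0)
      refine ⟨(x 0 + 2 * x 3) / 3, (2 * x 0 + x 3) / 3, funext fun i => ?_⟩
      fin_cases i
      · simp; field_simp; ring
      · simp; field_simp; linear_combination 2 * hA + hB
      · simp; field_simp; linear_combination hA + 2 * hB
      · simp; field_simp; ring
    · rintro ⟨s, t, rfl⟩
      constructor <;>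
        · simp only [Matrix.toLin'_apply, Matrix.mulVec_add, Matrix.mulVec_smul]
          funext i
          fin_cases i <;>
            simp [Matrix.mulVec, dotProduct, Fin.sum_univ_four] <;> ring
  · rw [linearIndependent_fin2]
    refine ⟨fun h => ?_, fun a h => ?_⟩
    · have := congrFun h 1
      simp at this
    · have h1 := congrFun h 1
      have h0 := congrFun h 0
      simp at h1 h0
      rw [h1] at h0
      exact h3 (by linear_combination h0)
end

section
/- Let K be a field with characteristic different from 3. There do not exist polynomials A, B ∈ K[x, y] with (-x+y)·A + (2x+y)·B = -(x²y + xy²) and (x+2y)·A + (x-y)·B = 0. In contrast, A = -(x-y)/3 and B = (x+2y)/3 satisfy (-x+y)·A + (2x+y)·B = x²+xy+y² and (x+2y)·A + (x-y)·B = 0. -/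
open MvPolynomial in
/-- Over a field `K` with `char K ≠ 3` (with `x = X 0`, `y = X 1` in `K[x,y]`):
there are no polynomials `A, B` with `(-x+y)A + (2x+y)B = -(x²y+xy²)` and
`(x+2y)A + (x-y)B = 0`; but `A = -(x-y)/3`, `B = (x+2y)/3` satisfy
`(-x+y)A + (2x+y)B = x²+xy+y²` and `(x+2y)A + (x-y)B = 0`. -/
theorem stmt_7 (K : Type*) [Field K] (hchar : ringChar K ≠ 3) :
    (¬ ∃ A B : MvPolynomial (Fin 2) K,
        (-(X 0) + X 1) * A + (2 * X 0 + X 1) * B = -((X 0) ^ 2 * X 1 + X 0 * (X 1) ^ 2) ∧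
        (X 0 + 2 * X 1) * A + (X 0 - X 1) * B = 0) ∧
    ((-(X 0) + X 1) * (-((3 : K)⁻¹ • ((X 0 : MvPolynomial (Fin 2) K) - X 1)))
        + (2 * X 0 + X 1) * ((3 : K)⁻¹ • ((X 0 : MvPolynomial (Fin 2) K) + 2 * X 1))
        = (X 0) ^ 2 + X 0 * X 1 + (X 1) ^ 2 ∧
      (X 0 + 2 * X 1) * (-((3 : K)⁻¹ • ((X 0 : MvPolynomial (Fin 2) K) - X 1)))
        + (X 0 - X 1) * ((3 : K)⁻¹ • ((X 0 : MvPolynomial (Fin 2) K) + 2 * X 1)) = 0) := by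
  have h3 : (3 : K) ≠ 0 := by
    intro h
    have hd : ringChar K ∣ 3 := ringChar.dvd (by exact_mod_cast h)
    rcases (Nat.dvd_prime Nat.prime_three).mp hd with h1 | h1
    · exact CharP.ringChar_ne_one h1
    · exact hchar h1
  refine ⟨?_, ?_, ?_⟩
  · rintro ⟨A, B, h1, h2⟩
    -- specialize y = 1
    set φ : MvPolynomial (Fin 2) K →ₐ[K] Polynomial K :=
      aeval ![Polynomial.X, 1] with hφ
    have e1 := congrArg φ h1
    have e2 := congrArg φ h2
    simp only [hφ, map_add, map_mul, map_neg, map_pow, map_ofNat, map_one, map_sub,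
      aeval_X, Matrix.cons_val_zero, Matrix.cons_val_one, Matrix.head_cons, map_zero,
      map_ofNat] at e1 e2
    set a := φ A
    set b := φ B
    have key : (Polynomial.X ^ 2 + Polynomial.X + 1) * (3 * a - (Polynomial.X - 1))
        = 1 - Polynomial.X := by
      linear_combination (1 - Polynomial.X) * e1 + (2 * Polynomial.X + 1) * e2
    by_cases hq : 3 * a - (Polynomial.X - 1) = 0
    · rw [hq, mul_zero] at key
      have := congrArg (fun p => Polynomial.coeff p 1) key
      simp only [Polynomial.coeff_zero, Polynomial.coeff_sub, Polynomial.coeff_one,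
        Polynomial.coeff_X_one] at this
      norm_num at this
    · have hP : (Polynomial.X ^ 2 + Polynomial.X + 1 : Polynomial K) ≠ 0 := by
        intro h
        have := congrArg (fun p => Polynomial.coeff p 2) h
        simp [Polynomial.coeff_X, Polynomial.coeff_one] at this
      have hdP : (Polynomial.X ^ 2 + Polynomial.X + 1 : Polynomial K).natDegree = 2 := by
        compute_degree!
      have hd1 : (1 - Polynomial.X : Polynomial K).natDegree = 1 := by
        compute_degree!
      have := congrArg Polynomial.natDegree key
      rw [Polynomial.natDegree_mul hP hq, hdP, hd1] at this
      omega
  · have hc : (C ((3:K)⁻¹) * C (3:K) : MvPolynomial (Fin 2) K) = 1 := by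
      rw [← C_mul, inv_mul_cancel₀ h3, C_1]
    have h33 : ((3 : MvPolynomial (Fin 2) K)) = C (3:K) := by rw [map_ofNat]
    simp only [smul_eq_C_mul]
    linear_combination ((X 0) ^ 2 + X 0 * X 1 + (X 1) ^ 2 : MvPolynomial (Fin 2) K) * hc
      + ((X 0) ^ 2 + X 0 * X 1 + (X 1) ^ 2 : MvPolynomial (Fin 2) K) * C ((3:K)⁻¹) * h33
  · simp only [smul_eq_C_mul]
    ring
end

section
/- Let K be a field of characteristic p > 3, let c be an integer with p/2 < c < 2p/3, and set m := 2c - p. In the polynomial ring K[x₁, x₂, x₃], let q := (x₁-x₂)(x₂-x₃)(x₁-x₃). Then (x₁-x₂)(x₁-x₃)·∂(q^m)/∂x₁ = (c mod p)·[(x₁-x₃)·(q^m - (12)·q^m) + (x₁-x₂)·(q^m - (13)·q^m)], where (12) and (13) act by permuting the variables x₁, x₂, x₃. -/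
open MvPolynomial

noncomputable section

/-- The Vandermonde polynomial `q = (x₁-x₂)(x₂-x₃)(x₁-x₃)` in `K[x₁,x₂,x₃]`. -/
def vdm (K : Type*) [Field K] : MvPolynomial (Fin 3) K :=
  (X 0 - X 1) * (X 1 - X 2) * (X 0 - X 2)

/-- For `char K = p > 3` and an integer `c` with `p/2 < c < 2p/3` (and `m := 2c - p`),
the cleared-denominator Dunkl identity expressing `D_{y₁}(q^{2c-p}) = 0`:
`q^{2c-p}` is a singular vector in degree `6c-3p` of `M_{1,c}(Triv)`. -/
theorem stmt_9 (K : Type*) [Field K] (p : ℕ) [CharP K p] (hp : p.Prime) (h3 : 3 < p)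
    (c : ℕ) (hc1 : p < 2 * c) (hc2 : 3 * c < 2 * p) :
    (X 0 - X 1) * (X 0 - X 2) * pderiv 0 (vdm K ^ (2 * c - p))
      = C ((c : K)) *
        ((X 0 - X 2) * (vdm K ^ (2 * c - p)
            - rename ⇑(Equiv.swap (0 : Fin 3) 1) (vdm K ^ (2 * c - p)))
          + (X 0 - X 1) * (vdm K ^ (2 * c - p)
            - rename ⇑(Equiv.swap (0 : Fin 3) 2) (vdm K ^ (2 * c - p)))) := by
  set m : ℕ := 2 * c - p with hm
  have hodd : Odd m := Nat.Even.sub_odd hc1.le (even_two_mul c) (hp.odd_of_ne_two (by omega))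
  have hs1 : rename ⇑(Equiv.swap (0:Fin 3) 1) (vdm K) = -(vdm K) := by
    have h2 : (Equiv.swap (0:Fin 3) 1) 2 = 2 := by decide
    simp [vdm, map_mul, map_sub, rename_X, h2]; ring
  have hs2 : rename ⇑(Equiv.swap (0:Fin 3) 2) (vdm K) = -(vdm K) := by
    have h1 : (Equiv.swap (0:Fin 3) 2) 1 = 1 := by decide
    simp [vdm, map_mul, map_sub, rename_X, h1]; ring
  have hr1 : rename ⇑(Equiv.swap (0:Fin 3) 1) (vdm K ^ m) = -(vdm K ^ m) := by
    rw [map_pow, hs1, hodd.neg_pow]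
  have hr2 : rename ⇑(Equiv.swap (0:Fin 3) 2) (vdm K ^ m) = -(vdm K ^ m) := by
    rw [map_pow, hs2, hodd.neg_pow]
  have hDq : pderiv (0:Fin 3) (vdm K) = (X 1 - X 2) * ((X 0 - X 2) + (X 0 - X 1)) := by
    simp [vdm, pderiv_mul, pderiv_X_self, pderiv_X_of_ne]; ring
  have hlz : pderiv (0:Fin 3) (vdm K ^ m)
      = (m : MvPolynomial (Fin 3) K) * (vdm K ^ (m - 1) * pderiv 0 (vdm K)) := by
    rw [(pderiv (0:Fin 3)).leibniz_pow, nsmul_eq_mul, smul_eq_mul]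
  have hqm : vdm K ^ m = vdm K ^ (m - 1) * vdm K := by
    conv_lhs => rw [show m = (m - 1) + 1 by omega]
    rw [pow_succ]
  have hck : ((m : MvPolynomial (Fin 3) K)) = 2 * C ((c : K)) := by
    rw [← map_natCast (C : K →+* MvPolynomial (Fin 3) K) m]
    have : ((m : K)) = 2 * (c : K) := by
      rw [hm, Nat.cast_sub hc1.le]
      simp [CharP.cast_eq_zero K p]
    rw [this, map_mul, map_ofNat]
  rw [hr1, hr2, hlz, hDq, hck, hqm, vdm]
  ring

end
end

section
/- Let K be a field of characteristic p > 3 and c an integer with p/2 < c < 2p/3; set M := c - (p+1)/2. Let α₀, …, α_M ∈ K and set v := Σ_{i=0}^{M} αᵢ · σ₂^{3i} · σ₃^{2c-p-1-2i} · q in R = K[b₊, b₋]. If v satisfies the cleared-denominator Dunkl identity b₋(b₊+b₋)·∂v = c·[(b₊+b₋)(v - (12)·v) + 2b₋(v - (13)·v)], then v is a K-scalar multiple of q^{2c-p}; equivalently, there is λ ∈ K with αᵢ = λ · binom(M,i) · (-4)^i · (-27)^{M-i} for all 0 ≤ i ≤ M. -/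
open MvPolynomial

noncomputable section

/-- The rescaled Young basis element `b₊` of `𝔥*`, inside `S𝔥* = K[b₊,b₋]`. -/
def bp (K : Type*) [Field K] : MvPolynomial (Fin 2) K := X 0

/-- The rescaled Young basis element `b₋`. -/
def bm (K : Type*) [Field K] : MvPolynomial (Fin 2) K := X 1

/-- The invariant `σ₂ = -(b₊² + 3b₋²)/12`. -/
def sig2 (K : Type*) [Field K] : MvPolynomial (Fin 2) K :=
  (12 : K)⁻¹ • (-(bp K ^ 2 + 3 * bm K ^ 2))

/-- The invariant `σ₃ = -(b₊³ - 9b₊b₋²)/108`. -/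
def sig3 (K : Type*) [Field K] : MvPolynomial (Fin 2) K :=
  (108 : K)⁻¹ • (-(bp K ^ 3 - 9 * bp K * bm K ^ 2))

/-- The Vandermonde polynomial `q = (b₊²b₋ - b₋³)/4`. -/
def qq (K : Type*) [Field K] : MvPolynomial (Fin 2) K :=
  (4 : K)⁻¹ • (bp K ^ 2 * bm K - bm K ^ 3)

/-- The action of the transposition `(12)` on `S𝔥*`: `b₊ ↦ b₊`, `b₋ ↦ -b₋`. -/
def s12 (K : Type*) [Field K] : MvPolynomial (Fin 2) K →ₐ[K] MvPolynomial (Fin 2) K :=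
  aeval ![X 0, -X 1]

/-- The action of the transposition `(13)` on `S𝔥*`:
`b₊ ↦ (-b₊-3b₋)/2`, `b₋ ↦ (-b₊+b₋)/2`. -/
def s13 (K : Type*) [Field K] : MvPolynomial (Fin 2) K →ₐ[K] MvPolynomial (Fin 2) K :=
  aeval ![(2 : K)⁻¹ • (-X 0 - 3 * X 1), (2 : K)⁻¹ • (-X 0 + X 1)]

/- ===================== auxiliary layer ===================== -/

section Aux
variable (K : Type*) [Field K]

abbrev R2 (K : Type*) [Field K] := MvPolynomial (Fin 2) K

/-- integer-coefficient (cleared) version of `12 • sig2`. -/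
def s2c : R2 K := -(bp K ^ 2 + 3 * bm K ^ 2)
/-- integer-coefficient (cleared) version of `108 • sig3`. -/
def s3c : R2 K := -(bp K ^ 3 - 9 * bp K * bm K ^ 2)
/-- integer-coefficient (cleared) version of `4 • qq`. -/
def qc : R2 K := bp K ^ 2 * bm K - bm K ^ 3
def AA : R2 K := bp K + 3 * bm K
def BB : R2 K := bm K * (bp K + bm K)
def DD : Derivation K (R2 K) (R2 K) := pderiv 0 + pderiv 1

lemma sig2_eq : sig2 K = (12:K)⁻¹ • s2c K := rfl
lemma sig3_eq : sig3 K = (108:K)⁻¹ • s3c K := rfl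
lemma qq_eq : qq K = (4:K)⁻¹ • qc K := rfl

lemma DD_ofNat (n : ℕ) [n.AtLeastTwo] : DD K (OfNat.ofNat n : R2 K) = 0 := by
  have : (OfNat.ofNat n : R2 K) = algebraMap K _ (OfNat.ofNat n) := by rw [map_ofNat]
  rw [this, Derivation.map_algebraMap]

lemma DD_bp : DD K (bp K) = 1 := by
  simp [DD, bp, Derivation.add_apply, pderiv_X]

lemma DD_bm : DD K (bm K) = 1 := by
  simp [DD, bm, Derivation.add_apply, pderiv_X]

lemma DD_s2c : DD K (s2c K) = -(2 * bp K + 6 * bm K) := by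
  simp [s2c, Derivation.leibniz, Derivation.leibniz_pow, DD_bp, DD_bm, DD_ofNat K 3]
  ring

lemma DD_s3c : DD K (s3c K) = -(3 * bp K ^2 - 9 * bm K^2 - 18 * bp K * bm K) := by
  simp [s3c, Derivation.leibniz, Derivation.leibniz_pow, DD_bp, DD_bm, DD_ofNat K 9]
  ring

lemma DD_qc : DD K (qc K) = 2 * bp K * bm K + bp K^2 - 3 * bm K^2 := by
  simp [qc, Derivation.leibniz, Derivation.leibniz_pow, DD_bp, DD_bm, DD_ofNat K 3]
  ring

lemma DD_C_mul (a : K) (t : R2 K) : DD K (C a * t) = C a * DD K t := by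
  have hC : (C a : R2 K) = algebraMap K _ a := rfl
  rw [Derivation.leibniz, hC, Derivation.map_algebraMap, smul_zero, add_zero, smul_eq_mul]

lemma DD_apply (x : R2 K) : DD K x = pderiv 0 x + pderiv 1 x :=
  Derivation.add_apply x

lemma K1c : 3 * (BB K * DD K (s2c K)) = 2 * (s2c K * AA K) - 2 * s3c K := by
  rw [DD_s2c]; unfold BB AA s2c s3c bp bm; ring

lemma K2c : BB K * DD K (s3c K) = s3c K * AA K + s2c K ^ 2 := by
  rw [DD_s3c]; unfold BB AA s2c s3c bp bm; ring

lemma K3c : BB K * DD K (qc K) = AA K * qc K := by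
  rw [DD_qc]; unfold BB AA qc bp bm; ring

lemma K4c : s2c K ^ 3 + s3c K ^ 2 = (-27) * qc K ^ 2 := by
  unfold qc s2c s3c bp bm; ring

lemma s12_bp : s12 K (bp K) = bp K := by simp [s12, bp, aeval_X]
lemma s12_bm : s12 K (bm K) = -(bm K) := by simp [s12, bm, aeval_X]

lemma s13_bp : s13 K (bp K) = C ((2:K)⁻¹) * (-(bp K) - 3 * bm K) := by
  simp [s13, bp, bm, aeval_X, smul_eq_C_mul]

lemma s13_bm : s13 K (bm K) = C ((2:K)⁻¹) * (-(bp K) + bm K) := by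
  simp [s13, bp, bm, aeval_X, smul_eq_C_mul]; ring

lemma s12_C (a : K) : s12 K (C a) = C a := by
  simp [s12, aeval_C, algebraMap_eq]

lemma s13_C (a : K) : s13 K (C a) = C a := by
  simp [s13, aeval_C, algebraMap_eq]

lemma s12_s2c : s12 K (s2c K) = s2c K := by
  simp only [s2c, map_neg, map_add, map_mul, map_pow, map_ofNat, s12_bp, s12_bm]
  ring

lemma s12_s3c : s12 K (s3c K) = s3c K := by
  simp only [s3c, map_neg, map_sub, map_mul, map_pow, map_ofNat, s12_bp, s12_bm]
  ring

lemma s12_qc : s12 K (qc K) = -(qc K) := by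
  simp only [qc, map_sub, map_mul, map_pow, s12_bp, s12_bm]
  ring

lemma h2R (h2 : (2:K) ≠ 0) : (2 : R2 K) * C ((2:K)⁻¹) = 1 := by
  have : (2 : R2 K) = C (2:K) := (map_ofNat C 2).symm
  rw [this, ← C_mul, mul_inv_cancel₀ h2, C_1]

variable {K}

lemma s13_s2c (h2 : (2:K) ≠ 0) : s13 K (s2c K) = s2c K := by
  simp only [s2c, map_neg, map_add, map_mul, map_pow, map_ofNat, s13_bp, s13_bm]
  linear_combination (-(bp K^2 + 3*bm K^2) * (2 * C ((2:K)⁻¹) + 1)) * h2R K h2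

lemma s13_s3c (h2 : (2:K) ≠ 0) : s13 K (s3c K) = s3c K := by
  simp only [s3c, map_neg, map_sub, map_mul, map_pow, map_ofNat, s13_bp, s13_bm]
  linear_combination (-(bp K^3 - 9*bp K*bm K^2) * (4 * C ((2:K)⁻¹)^2 + 2 * C ((2:K)⁻¹) + 1)) * h2R K h2

lemma s13_qc (h2 : (2:K) ≠ 0) : s13 K (qc K) = -(qc K) := by
  simp only [qc, map_sub, map_mul, map_pow, s13_bp, s13_bm]
  linear_combination (-(bp K^2*bm K - bm K^3) * (4 * C ((2:K)⁻¹)^2 + 2 * C ((2:K)⁻¹) + 1)) * h2R K h2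

variable (K)

lemma key_i (i e : ℕ) :
    3 * (BB K * DD K (s2c K ^ (3*i) * s3c K ^ (2*e) * qc K))
      = (6*i + 6*e + 3) • (AA K * (s2c K ^ (3*i) * s3c K ^ (2*e) * qc K))
        + (6*e) • (s2c K ^ (3*i+2) * s3c K ^ (2*e-1) * qc K)
        - (6*i) • (s2c K ^ (3*i-1) * s3c K ^ (2*e+1) * qc K) := by
  have L1 := K1c K
  have L2 := K2c K
  have L3 := K3c K
  rw [Derivation.leibniz, Derivation.leibniz, Derivation.leibniz_pow, Derivation.leibniz_pow]
  simp only [smul_eq_mul, nsmul_eq_mul]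
  rcases i with _ | j <;> rcases e with _ | f
  · push_cast
    linear_combination 3 * L3
  · simp only [show 2*(f+1)-1 = 2*f+1 from by omega]
    push_cast
    linear_combination 3 * s3c K ^ (2*f+2) * L3 + ((2*(f:R2 K)+2) * 3 * qc K * s3c K ^ (2*f+1)) * L2
  · simp only [show 3*(j+1)-1 = 3*j+2 from by omega]
    push_cast
    linear_combination 3 * s2c K ^ (3*j+3) * L3 + ((3*(j:R2 K)+3) * qc K * s2c K ^ (3*j+2)) * L1
  · simp only [show 3*(j+1)-1 = 3*j+2 from by omega, show 2*(f+1)-1 = 2*f+1 from by omega]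
    push_cast
    linear_combination 3 * s2c K ^ (3*j+3) * s3c K ^ (2*f+2) * L3
      + ((2*(f:R2 K)+2) * 3 * qc K * s2c K ^ (3*j+3) * s3c K ^ (2*f+1)) * L2
      + ((3*(j:R2 K)+3) * qc K * s3c K ^ (2*f+2) * s2c K ^ (3*j+2)) * L1

/-- evaluation `b₊ ↦ X`, `b₋ ↦ 1` into `K[X]`. -/
def phiP : R2 K →ₐ[K] Polynomial K := aeval ![Polynomial.X, 1]

lemma phiP_bp : phiP K (bp K) = Polynomial.X := by simp [phiP, bp, aeval_X]
lemma phiP_bm : phiP K (bm K) = 1 := by simp [phiP, bm, aeval_X]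
lemma phiP_C (a : K) : phiP K (C a) = Polynomial.C a := by
  simp [phiP, aeval_C, Polynomial.algebraMap_eq]

lemma phiP_s2c : phiP K (s2c K) = -(Polynomial.X^2 + 3) := by
  simp only [s2c, map_neg, map_add, map_mul, map_pow, map_ofNat, phiP_bp, phiP_bm]
  ring

lemma phiP_s3c : phiP K (s3c K) = Polynomial.X * (9 - Polynomial.X^2) := by
  simp only [s3c, map_neg, map_sub, map_mul, map_pow, map_ofNat, phiP_bp, phiP_bm]
  ring

lemma phiP_qc : phiP K (qc K) = Polynomial.X^2 - 1 := by
  simp only [qc, map_sub, map_mul, map_pow, phiP_bp, phiP_bm]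
  ring

lemma qc_ne (h1 : (1:K) ≠ 0) : qc K ≠ 0 := by
  intro h
  have h2 := congrArg (phiP K) h
  rw [phiP_qc, map_zero] at h2
  have h3 := congrArg (Polynomial.eval 0) h2
  simp at h3

lemma extract_aux {K : Type*} [Field K] (h3K : (3:K) ≠ 0) (M : ℕ) (β : ℕ → K)
    (h : ∑ j ∈ Finset.range M, Polynomial.C (β j) *
        ((-(Polynomial.X^2+3))^(3*j+2) * (Polynomial.X * (9 - Polynomial.X^2))^(2*(M-j)-1))
        = (0 : Polynomial K)) :
    ∀ j < M, β j = 0 := by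
  have h9 : (9:K) ≠ 0 := by
    intro h9; apply h3K
    have h99 : (9:K) = 3 * 3 := by norm_num
    rcases mul_eq_zero.mp (h99 ▸ h9) with h' | h' <;> exact h'
  have hm3 : (-3:K) ≠ 0 := by simpa using h3K
  suffices H : ∀ k, ∀ j, j < M → M - j ≤ k → β j = 0 from fun j hj => H M j hj (by omega)
  intro k
  induction k with
  | zero => intro j hj hk; omega
  | succ k ih =>
    intro j hj hk
    by_cases hc : M - j ≤ k
    · exact ih j hj hc
    have hMj : M - j = k + 1 := by omega
    have h0 := congrArg (fun P => Polynomial.coeff P (2*(M-j)-1)) h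
    simp only [Polynomial.finset_sum_coeff, Polynomial.coeff_zero] at h0
    rw [Finset.sum_eq_single j ?side1 ?side2] at h0
    case side1 =>
      intro b hb hbj
      rcases lt_or_gt_of_ne hbj with hlt | hgt
      · have e2 : Polynomial.C (β b) * ((-(Polynomial.X^2+3))^(3*b+2)
            * (Polynomial.X * (9 - Polynomial.X^2))^(2*(M-b)-1))
            = (Polynomial.C (β b) * (-(Polynomial.X^2+3))^(3*b+2) * (9 - Polynomial.X^2)^(2*(M-b)-1))
              * Polynomial.X^(2*(M-b)-1) := by rw [mul_pow]; ring
        rw [e2, Polynomial.coeff_mul_X_pow', if_neg (by simp only [Finset.mem_range] at hb; omega)]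
      · rw [ih b (Finset.mem_range.mp hb) (by omega)]; simp
    case side2 =>
      intro hj'; exact absurd (Finset.mem_range.mpr hj) hj'
    have e1 : Polynomial.C (β j) * ((-(Polynomial.X^2+3))^(3*j+2)
        * (Polynomial.X * (9 - Polynomial.X^2))^(2*(M-j)-1))
        = (Polynomial.C (β j) * (-(Polynomial.X^2+3))^(3*j+2) * (9 - Polynomial.X^2)^(2*(M-j)-1))
          * Polynomial.X^(2*(M-j)-1) := by rw [mul_pow]; ring
    rw [e1, Polynomial.coeff_mul_X_pow', if_pos le_rfl, Nat.sub_self,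
      Polynomial.coeff_zero_eq_eval_zero] at h0
    have e3 : Polynomial.eval 0 (Polynomial.C (β j) * (-(Polynomial.X^2+3))^(3*j+2)
        * (9 - Polynomial.X^2)^(2*(M-j)-1))
        = β j * ((-3:K)^(3*j+2) * (9:K)^(2*(M-j)-1)) := by
      simp only [Polynomial.eval_mul, Polynomial.eval_pow, Polynomial.eval_C, Polynomial.eval_neg,
        Polynomial.eval_add, Polynomial.eval_sub, Polynomial.eval_ofNat, Polynomial.eval_X]
      norm_num
      ring
    rw [e3] at h0
    exact (mul_eq_zero.mp h0).resolve_right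
      (mul_ne_zero (pow_ne_zero _ hm3) (pow_ne_zero _ h9))

end Aux

/-- Uniqueness (up to scalar) of singular vectors in the sign-isotypic component of degree
`6c-3p` of `M_{1,c}(Triv)` for `p/2 < c < 2p/3`: any solution of the cleared-denominator
Dunkl equation of the given shape is a scalar multiple of `q^{2c-p}`. -/
theorem stmt_10 (K : Type*) [Field K] (p : ℕ) [CharP K p] (hp : p.Prime) (h3 : 3 < p)
    (c M : ℕ) (hc1 : p < 2 * c) (hc2 : 3 * c < 2 * p) (hM : M = c - (p + 1) / 2)
    (α : ℕ → K) (v : MvPolynomial (Fin 2) K)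
    (hv : v = ∑ i ∈ Finset.range (M + 1),
        C (α i) * sig2 K ^ (3 * i) * sig3 K ^ (2 * c - p - 1 - 2 * i) * qq K)
    (hsing : bm K * (bp K + bm K) * (pderiv 0 v + pderiv 1 v)
        = C ((c : K)) * ((bp K + bm K) * (v - s12 K v) + 2 * bm K * (v - s13 K v))) :
    ∃ l : K, v = l • qq K ^ (2 * c - p) ∧
      ∀ i ≤ M, α i = l * (M.choose i : K) * (-4 : K) ^ i * (-27 : K) ^ (M - i) := by
  -- numeric groundwork
  have hp2 : p ≠ 2 := by omega
  obtain ⟨t, ht⟩ := hp.odd_of_ne_two hp2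
  have e1 : 2 * c - p - 1 = 2 * M := by omega
  have e2 : 2 * c - p = 2 * M + 1 := by omega
  have e3 : 6 * c = 6 * M + 3 + 3 * p := by omega
  have eMp : M < p := by omega
  have hcast : ∀ n : ℕ, 0 < n → n < p → ((n:K) ≠ 0) := by
    intro n h1 h2 h0
    rw [CharP.cast_eq_zero_iff K p] at h0
    exact absurd (Nat.le_of_dvd h1 h0) (by omega)
  have h2K : (2:K) ≠ 0 := by
    have := hcast 2 (by norm_num) (by omega); exact_mod_cast this
  have h3K : (3:K) ≠ 0 := by
    have := hcast 3 (by norm_num) (by omega); exact_mod_cast this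
  have h4K : (4:K) ≠ 0 := by
    have : (4:K) = 2 * 2 := by norm_num
    rw [this]; exact mul_ne_zero h2K h2K
  have h6K : (6:K) ≠ 0 := by
    have : (6:K) = 2 * 3 := by norm_num
    rw [this]; exact mul_ne_zero h2K h3K
  have h12K : (12:K) ≠ 0 := by
    have : (12:K) = 2 * 6 := by norm_num
    rw [this]; exact mul_ne_zero h2K h6K
  have h27K : (27:K) ≠ 0 := by
    have : (27:K) = 3 * (3 * 3) := by norm_num
    rw [this]; exact mul_ne_zero h3K (mul_ne_zero h3K h3K)
  have h108K : (108:K) ≠ 0 := by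
    have : (108:K) = 4 * 27 := by norm_num
    rw [this]; exact mul_ne_zero h4K h27K
  have h1K : (1:K) ≠ 0 := one_ne_zero
  -- rescaled coefficients
  obtain ⟨A, hA⟩ : ∃ A : ℕ → K, ∀ i,
      A i = α i * ((12:K)⁻¹)^(3*i) * ((108:K)⁻¹)^(2*(M-i)) * (4:K)⁻¹ :=
    ⟨fun i => α i * ((12:K)⁻¹)^(3*i) * ((108:K)⁻¹)^(2*(M-i)) * (4:K)⁻¹, fun i => rfl⟩
  have hv' : v = ∑ i ∈ Finset.range (M+1),
      C (A i) * (s2c K ^ (3*i) * s3c K ^ (2*(M-i)) * qc K) := by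
    rw [hv]
    apply Finset.sum_congr rfl
    intro i hi
    rw [Finset.mem_range] at hi
    have hexp : 2*c - p - 1 - 2*i = 2*(M-i) := by omega
    rw [hexp, sig2_eq, sig3_eq, qq_eq, smul_pow, smul_pow,
      smul_eq_C_mul, smul_eq_C_mul, smul_eq_C_mul, hA i]
    simp only [C_mul, C_pow]
    ring
  -- action of s12 and s13 on v
  have hs12 : s12 K v = -v := by
    rw [hv', map_sum, ← Finset.sum_neg_distrib]
    apply Finset.sum_congr rfl
    intro i _
    simp only [map_mul, map_pow, s12_s2c, s12_s3c, s12_qc, s12_C]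
    ring
  have hs13 : s13 K v = -v := by
    rw [hv', map_sum, ← Finset.sum_neg_distrib]
    apply Finset.sum_congr rfl
    intro i _
    simp only [map_mul, map_pow, s13_s2c h2K, s13_s3c h2K, s13_qc h2K, s13_C]
    ring
  -- the main equation, cleared
  have hE : 3 * (BB K * DD K v) = C (((6*c : ℕ)) : K) * (AA K * v) := by
    have h6c : (C (((6*c : ℕ)) : K) : MvPolynomial (Fin 2) K) = 6 * C ((c : K)) := by
      rw [Nat.cast_mul, C_mul, Nat.cast_ofNat, map_ofNat]
    rw [DD_apply, h6c, show BB K = bm K * (bp K + bm K) from rfl,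
      show AA K = bp K + 3*bm K from rfl]
    rw [hs12, hs13] at hsing
    linear_combination 3 * hsing
  -- expand the left side through the sum
  have hL : 3 * (BB K * DD K v) = ∑ i ∈ Finset.range (M+1),
      C (A i) * (3 * (BB K * DD K (s2c K ^ (3*i) * s3c K ^ (2*(M-i)) * qc K))) := by
    rw [hv', map_sum, Finset.mul_sum, Finset.mul_sum]
    apply Finset.sum_congr rfl
    intro i _
    rw [DD_C_mul]
    ring
  -- match the right side with the invariant part of key_i
  have hR : C (((6*c : ℕ)) : K) * (AA K * v) = ∑ i ∈ Finset.range (M+1),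
      C (A i) * ((6*M+3) • (AA K * (s2c K ^ (3*i) * s3c K ^ (2*(M-i)) * qc K))) := by
    have hch : (((6*M+3 : ℕ)) : K) = (((6*c : ℕ)) : K) := by
      have hp0 : ((p : ℕ) : K) = 0 := CharP.cast_eq_zero K p
      rw [e3]; push_cast; rw [hp0]; ring
    rw [hv', Finset.mul_sum, Finset.mul_sum]
    apply Finset.sum_congr rfl
    intro i _
    rw [nsmul_eq_mul, (map_natCast (C : K →+* MvPolynomial (Fin 2) K) (6*M+3)).symm]
    rw [hch]
    ring
  -- the "P-part" identity
  have hP0 : ∑ i ∈ Finset.range (M+1),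
      (C (A i) * ((6*(M-i)) • (s2c K ^ (3*i+2) * s3c K ^ (2*(M-i)-1)))
        - C (A i) * ((6*i) • (s2c K ^ (3*i-1) * s3c K ^ (2*(M-i)+1)))) * qc K = 0 := by
    have step : ∀ i ∈ Finset.range (M+1),
        (C (A i) * ((6*(M-i)) • (s2c K ^ (3*i+2) * s3c K ^ (2*(M-i)-1)))
          - C (A i) * ((6*i) • (s2c K ^ (3*i-1) * s3c K ^ (2*(M-i)+1)))) * qc K
        = C (A i) * (3 * (BB K * DD K (s2c K ^ (3*i) * s3c K ^ (2*(M-i)) * qc K)))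
          - C (A i) * ((6*M+3) • (AA K * (s2c K ^ (3*i) * s3c K ^ (2*(M-i)) * qc K))) := by
      intro i hi
      rw [Finset.mem_range] at hi
      rw [key_i K i (M-i), show 6*i + 6*(M-i) + 3 = 6*M+3 from by omega]
      simp only [nsmul_eq_mul]
      ring
    rw [Finset.sum_congr rfl step, Finset.sum_sub_distrib, ← hL, ← hR, hE, sub_self]
  have hqc : qc K ≠ 0 := qc_ne K h1K
  have hP1 : ∑ i ∈ Finset.range (M+1),
      (C (A i) * ((6*(M-i)) • (s2c K ^ (3*i+2) * s3c K ^ (2*(M-i)-1)))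
        - C (A i) * ((6*i) • (s2c K ^ (3*i-1) * s3c K ^ (2*(M-i)+1)))) = 0 := by
    have h := hP0
    rw [← Finset.sum_mul] at h
    rcases mul_eq_zero.mp h with h' | h'
    · exact h'
    · exact absurd h' hqc
  obtain ⟨B, hB⟩ : ∃ B : ℕ → K, ∀ j,
      B j = ((6*(M-j) : ℕ) : K) * A j - ((6*(j+1) : ℕ) : K) * A (j+1) :=
    ⟨fun j => ((6*(M-j) : ℕ) : K) * A j - ((6*(j+1) : ℕ) : K) * A (j+1), fun j => rfl⟩
  have hsplit : ∑ j ∈ Finset.range M,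
      C (B j) * (s2c K ^ (3*j+2) * s3c K ^ (2*(M-j)-1)) = 0 := by
    rw [Finset.sum_sub_distrib] at hP1
    rw [Finset.sum_range_succ] at hP1
    rw [Finset.sum_range_succ'] at hP1
    rw [Nat.sub_self] at hP1
    simp only [Nat.mul_zero, mul_zero, zero_smul, smul_zero, add_zero] at hP1
    rw [← Finset.sum_sub_distrib] at hP1
    rw [← hP1]
    apply Finset.sum_congr rfl
    intro j hj
    rw [Finset.mem_range] at hj
    rw [show 3*(j+1)-1 = 3*j+2 from by omega, show 2*(M-(j+1))+1 = 2*(M-j)-1 from by omega]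
    rw [hB j, map_sub, C_mul, C_mul]
    simp only [nsmul_eq_mul]
    rw [(map_natCast (C : K →+* MvPolynomial (Fin 2) K) (6*(M-j))).symm,
      (map_natCast (C : K →+* MvPolynomial (Fin 2) K) (6*(j+1))).symm]
    ring
  -- transfer to K[X] and extract coefficients
  have hphi : ∑ j ∈ Finset.range M, Polynomial.C (B j) *
      ((-(Polynomial.X^2+3))^(3*j+2) * (Polynomial.X * (9 - Polynomial.X^2))^(2*(M-j)-1))
      = (0 : Polynomial K) := by
    have h := congrArg (phiP K) hsplit
    simpa only [map_sum, map_mul, map_pow, map_zero, phiP_s2c, phiP_s3c, phiP_C] using h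
  have hB0 : ∀ j < M, B j = 0 := extract_aux h3K M B hphi
  -- the recursion on A
  have hrec : ∀ j, j < M → (((M-j) : ℕ) : K) * A j = (((j+1) : ℕ) : K) * A (j+1) := by
    intro j hj
    have h := hB0 j hj
    rw [hB j] at h
    have h6 : ((6:ℕ):K) ≠ 0 := by exact_mod_cast h6K
    apply mul_left_cancel₀ h6
    rw [Nat.cast_mul, Nat.cast_mul] at h
    linear_combination h
  -- closed form for A
  have hAcf : ∀ k, k ≤ M → A (M-k) = (M.choose (M-k) : K) * A M := by
    intro k
    induction k with
    | zero => intro _; simp [Nat.choose_self]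
    | succ k ih =>
      intro hk1
      have hr := hrec (M-(k+1)) (by omega)
      rw [show M - (M-(k+1)) = k+1 from by omega, show M-(k+1)+1 = M-k from by omega] at hr
      rw [ih (by omega)] at hr
      have hcb : (k+1) * M.choose (M-(k+1)) = (M-k) * M.choose (M-k) := by
        have h := Nat.choose_succ_right_eq M (M-(k+1))
        rw [show M-(k+1)+1 = M-k from by omega, show M - (M-(k+1)) = k+1 from by omega] at h
        rw [mul_comm (k+1), mul_comm (M-k)]; exact h.symm
      have hk1K : (((k+1):ℕ):K) ≠ 0 := hcast (k+1) (by omega) (by omega)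
      apply mul_left_cancel₀ hk1K
      rw [hr]
      have hcbK := congrArg (Nat.cast : ℕ → K) hcb
      push_cast at hcbK ⊢
      linear_combination (-(A M)) * hcbK
  have hAi : ∀ i, i ≤ M → A i = (M.choose i : K) * A M := by
    intro i hi
    have h := hAcf (M-i) (by omega)
    rwa [show M-(M-i) = i from by omega] at h
  -- conclusion
  refine ⟨A M * (-27:K)^M * (4:K)^(2*M+1), ?_, ?_⟩
  · -- v = l • qq ^ (2c - p)
    have hv2 : v = C (A M) * ((s2c K ^ 3 + s3c K ^ 2)^M * qc K) := by
      rw [hv', add_pow, Finset.sum_mul, Finset.mul_sum]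
      apply Finset.sum_congr rfl
      intro i hi
      rw [Finset.mem_range] at hi
      rw [hAi i (by omega), ← pow_mul, ← pow_mul]
      rw [(map_natCast (C : K →+* MvPolynomial (Fin 2) K) (M.choose i)).symm]
      rw [C_mul]
      ring
    rw [K4c] at hv2
    have h44 : (4:K)^(2*M+1) * ((4:K)⁻¹)^(2*M+1) = 1 := by
      rw [← mul_pow, mul_inv_cancel₀ h4K, one_pow]
    rw [e2, hv2, qq_eq, smul_pow, smul_smul, smul_eq_C_mul]
    rw [show A M * (-27:K)^M * (4:K)^(2*M+1) * ((4:K)⁻¹)^(2*M+1) = A M * (-27:K)^M from by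
      rw [mul_assoc (A M * (-27:K)^M), h44, mul_one]]
    rw [C_mul, C_pow]
    rw [show (C (-27:K) : MvPolynomial (Fin 2) K) = -27 from by rw [map_neg, map_ofNat]]
    ring
  · -- coefficient formula
    intro i hi
    have hα : α i = A i * (12:K)^(3*i) * (108:K)^(2*(M-i)) * 4 := by
      rw [hA i]
      have r12 : ((12:K)⁻¹)^(3*i) * (12:K)^(3*i) = 1 := by
        rw [← mul_pow, inv_mul_cancel₀ h12K, one_pow]
      have r108 : ((108:K)⁻¹)^(2*(M-i)) * (108:K)^(2*(M-i)) = 1 := by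
        rw [← mul_pow, inv_mul_cancel₀ h108K, one_pow]
      have r4 : (4:K)⁻¹ * 4 = 1 := inv_mul_cancel₀ h4K
      have key : α i * (((12:K)⁻¹)^(3*i) * (12:K)^(3*i))
          * ((((108:K)⁻¹)^(2*(M-i))) * ((108:K))^(2*(M-i))) * (((4:K)⁻¹) * 4) = α i := by
        rw [r12, r108, r4]; ring
      linear_combination -key
    set k := M - i with hk
    have hMk : M = i + k := by omega
    have hpow : (12:K)^(3*i) * (108:K)^(2*k) * 4
        = (-27:K)^M * (4:K)^(2*M+1) * (-4:K)^i * (-27:K)^k := by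
      rw [hMk]
      have q1 : (12:K)^(3*i) = 1728^i := by rw [pow_mul]; norm_num
      have q2 : (108:K)^(2*k) = 11664^k := by rw [pow_mul]; norm_num
      have q3 : (-27:K)^(i+k) = (-27)^i * (-27)^k := pow_add _ _ _
      have q4 : (4:K)^(2*(i+k)+1) = 16^i * (16^k * 4) := by
        rw [pow_succ, pow_mul, show ((4:K)^2) = 16 from by norm_num, pow_add]; ring
      rw [q1, q2, q3, q4]
      have q5 : (1728:K)^i = (-27:K)^i * ((16:K)^i * (-4:K)^i) := by
        rw [← mul_pow, ← mul_pow]; norm_num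
      have q6 : (11664:K)^k = (-27:K)^k * ((-27:K)^k * (16:K)^k) := by
        rw [← mul_pow, ← mul_pow]; norm_num
      rw [q5, q6]; ring
    rw [hα, hAi i hi]
    linear_combination ((M.choose i : K) * A M) * hpow

end
end

section
/- Let K be a field of characteristic p > 3, let c be an integer with p/2 < c < 2p/3, set M := c - (p+1)/2, and let k ≥ 1 be a natural number. In the polynomial ring K[a, b], define w := a^{2p-3c} · b · Σ_{j=0}^{M} binom(M,j) · (2j+1)⁻¹ · (-4a³)^{M-j} · (-27b²)^{j} and d := -4a³ - 27b². If A, B ∈ K[a, b] satisfy A · d^k = B · w, then there exists C ∈ K[a, b] such that A = C · w and B = C · d^k. -/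
open MvPolynomial


lemma pf_sum (K : Type*) [Field K] :
    ∀ (M : ℕ) (x : K), (∀ i : ℕ, i ≤ M → x + i ≠ 0) →
    (∑ j ∈ Finset.range (M+1), (-1)^j * (M.choose j : K) * (x + j)⁻¹) *
      ∏ i ∈ Finset.range (M+1), (x + i) = (Nat.factorial M : K) := by
  intro M
  induction M with
  | zero =>
    intro x hx
    have h0 := hx 0 le_rfl
    simp at h0 ⊢
    field_simp
  | succ M ih =>
    intro x hx
    have hx0 : x ≠ 0 := by have := hx 0 (by omega); simpa using this
    have hxM : ∀ i : ℕ, i ≤ M → x + i ≠ 0 := fun i hi => hx i (by omega)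
    have hx1 : ∀ i : ℕ, i ≤ M → (x + 1) + i ≠ 0 := by
      intro i hi
      have h := hx (i+1) (by omega)
      have e : x + ((i+1 : ℕ) : K) = (x + 1) + i := by push_cast; ring
      rw [e] at h; exact h
    have hP : ∀ i ∈ Finset.range (M+1), x + (i:K) ≠ 0 := fun i hi =>
      hxM i (by simpa [Nat.lt_succ_iff] using Finset.mem_range.mp hi)
    set S : K := ∑ j ∈ Finset.range (M+1), (-1)^j * (M.choose j : K) * (x + j)⁻¹ with hS
    set S' : K := ∑ j ∈ Finset.range (M+1), (-1)^j * (M.choose j : K) * ((x+1) + j)⁻¹ with hS'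
    set P : K := ∏ i ∈ Finset.range (M+1), (x + i) with hPdef
    set P' : K := ∏ i ∈ Finset.range (M+1), ((x+1) + i) with hP'def
    have hPne : P ≠ 0 := Finset.prod_ne_zero_iff.mpr hP
    have ihx : S * P = (Nat.factorial M : K) := ih x hxM
    have ihx1 : S' * P' = (Nat.factorial M : K) := ih (x+1) hx1
    have hprod1 : ∏ i ∈ Finset.range (M+2), (x + (i:K)) = P * (x + ((M+1 : ℕ):K)) := by
      rw [Finset.prod_range_succ]
    have hprod2 : ∏ i ∈ Finset.range (M+2), (x + (i:K)) = x * P' := by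
      rw [Finset.prod_range_succ']
      simp only [Nat.cast_zero, add_zero]
      rw [mul_comm]
      congr 1
      refine Finset.prod_congr rfl fun i _ => ?_
      push_cast; ring
    -- the sum relation
    have hS'alt : S' = ∑ j ∈ Finset.range (M+1), (-1)^j * (M.choose j : K) * (x + ((j+1:ℕ):K))⁻¹ := by
      refine Finset.sum_congr rfl fun j _ => ?_
      have e : x + ((j+1 : ℕ) : K) = (x + 1) + j := by push_cast; ring
      rw [e]
    set T : K := ∑ j ∈ Finset.range (M+1), (-1)^j * (M.choose (j+1) : K) * (x + ((j+1:ℕ):K))⁻¹ with hT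
    have hST : S = -(∑ j ∈ Finset.range M, (-1)^j * (M.choose (j+1) : K) * (x + ((j+1:ℕ):K))⁻¹) + (x + ((0:ℕ):K))⁻¹ := by
      rw [hS, Finset.sum_range_succ']
      simp only [Nat.choose_zero_right, Nat.cast_one, pow_zero, one_mul]
      rw [← Finset.sum_neg_distrib]
      congr 1
      refine Finset.sum_congr rfl fun j _ => ?_
      ring
    have hTT : T = ∑ j ∈ Finset.range M, (-1)^j * (M.choose (j+1) : K) * (x + ((j+1:ℕ):K))⁻¹ := by
      rw [hT, Finset.sum_range_succ, Nat.choose_eq_zero_of_lt (by omega)]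
      simp
    have hsum : ∑ j ∈ Finset.range (M+2), (-1:K)^j * (((M+1).choose j : ℕ) : K) * (x + j)⁻¹
        = S - S' := by
      rw [Finset.sum_range_succ']
      have hterm : ∀ j ∈ Finset.range (M+1),
          (-1:K)^(j+1) * (((M+1).choose (j+1) : ℕ) : K) * (x + ((j+1:ℕ):K))⁻¹
          = -((-1)^j * (M.choose j : K) * (x + ((j+1:ℕ):K))⁻¹)
            - (-1)^j * (M.choose (j+1) : K) * (x + ((j+1:ℕ):K))⁻¹ := by
        intro j _
        rw [Nat.choose_succ_succ]
        push_cast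
        ring
      rw [Finset.sum_congr rfl hterm, Finset.sum_sub_distrib, Finset.sum_neg_distrib]
      rw [← hS'alt, ← hT]
      simp only [Nat.choose_zero_right, Nat.cast_one, pow_zero, one_mul]
      rw [hTT] at *
      rw [hST]
      ring
    -- now conclude
    rw [hsum, hprod1, sub_mul, ← mul_assoc, ihx]
    have e2 : S' * (P * (x + ((M+1:ℕ):K))) = x * (Nat.factorial M : K) := by
      rw [← hprod1, hprod2]
      rw [show S' * (x * P') = x * (S' * P') by ring, ihx1]
    rw [e2]
    rw [Nat.factorial_succ]
    push_cast
    ring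


lemma prime_quad (K : Type*) [Field K] (q : Polynomial K) (r : K) (hr : r ≠ 0)
    (hodd : Odd q.natDegree) (hqne : q ≠ 0) :
    Prime ((Polynomial.C q + Polynomial.C (Polynomial.C r) * Polynomial.X ^ 2) :
      Polynomial (Polynomial K)) := by
  have hrC : (Polynomial.C r : Polynomial K) ≠ 0 := Polynomial.C_ne_zero.mpr hr
  have hu : IsUnit (Polynomial.C r : Polynomial K) := Polynomial.isUnit_C.mpr (isUnit_iff_ne_zero.mpr hr)
  set D : Polynomial (Polynomial K) :=
    Polynomial.C q + Polynomial.C (Polynomial.C r) * Polynomial.X ^ 2 with hD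
  have hc2 : D.coeff 2 = Polynomial.C r := by
    rw [hD]
    simp [Polynomial.coeff_C, Polynomial.coeff_C_mul, Polynomial.coeff_X_pow]
  have hc1 : D.coeff 1 = 0 := by
    rw [hD]
    simp [Polynomial.coeff_C, Polynomial.coeff_C_mul, Polynomial.coeff_X_pow]
  have hc0 : D.coeff 0 = q := by
    rw [hD]
    simp [Polynomial.coeff_C, Polynomial.coeff_C_mul, Polynomial.coeff_X_pow]
  have hDdeg : D.natDegree = 2 := by
    rw [hD, Polynomial.natDegree_add_eq_right_of_natDegree_lt]
    · exact Polynomial.natDegree_C_mul_X_pow _ _ hrC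
    · rw [Polynomial.natDegree_C, Polynomial.natDegree_C_mul_X_pow _ _ hrC]
      omega
  have hDne : D ≠ 0 := fun h => by simp [h] at hDdeg
  have hirr : Irreducible D := by
    constructor
    · exact Polynomial.not_isUnit_of_natDegree_pos _ (by omega)
    · intro f g hfg
      by_contra hcon
      push_neg at hcon
      obtain ⟨hf, hg⟩ := hcon
      have hfne : f ≠ 0 := fun h => hDne (by simp [hfg, h])
      have hgne : g ≠ 0 := fun h => hDne (by simp [hfg, h])
      have hdeg : f.natDegree + g.natDegree = 2 := by
        rw [← Polynomial.natDegree_mul hfne hgne, ← hfg, hDdeg]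
      have hdeg0 : ∀ h : Polynomial (Polynomial K), h ∣ D → h.natDegree = 0 → IsUnit h := by
        intro h hdvd h0
        obtain ⟨u, rfl⟩ := Polynomial.natDegree_eq_zero.mp h0
        rw [Polynomial.C_dvd_iff_dvd_coeff] at hdvd
        have hu2 := hdvd 2
        rw [hc2] at hu2
        exact Polynomial.isUnit_C.mpr (isUnit_of_dvd_unit hu2 hu)
      have hf1 : f.natDegree = 1 := by
        rcases Nat.lt_or_ge f.natDegree 1 with h | h
        · exact absurd (hdeg0 f ⟨g, hfg⟩ (by omega)) hf
        rcases Nat.lt_or_ge g.natDegree 1 with h' | h'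
        · exact absurd (hdeg0 g ⟨f, by rw [hfg]; ring⟩ (by omega)) hg
        omega
      have hg1 : g.natDegree = 1 := by omega
      obtain ⟨a, b, hfab⟩ := Polynomial.exists_eq_X_add_C_of_natDegree_le_one (le_of_eq hf1)
      obtain ⟨s, t, hgst⟩ := Polynomial.exists_eq_X_add_C_of_natDegree_le_one (le_of_eq hg1)
      rw [hfab, hgst] at hfg
      have hexp : (Polynomial.C a * Polynomial.X + Polynomial.C b) *
          (Polynomial.C s * Polynomial.X + Polynomial.C t)
          = Polynomial.C (a*s) * Polynomial.X^2 + Polynomial.C (a*t + b*s) * Polynomial.X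
            + Polynomial.C (b*t) := by
        simp only [Polynomial.C_mul, Polynomial.C_add]; ring
      rw [hexp] at hfg
      have e2 : Polynomial.C r = a * s := by
        have h := congrArg (fun P => Polynomial.coeff P 2) hfg
        rw [hc2] at h
        simpa [Polynomial.coeff_C, Polynomial.coeff_C_mul, Polynomial.coeff_X_pow,
          Polynomial.coeff_X, Polynomial.coeff_add, mul_assoc] using h
      have e1 : (0 : Polynomial K) = a * t + b * s := by
        have h := congrArg (fun P => Polynomial.coeff P 1) hfg
        rw [hc1] at h
        simpa [Polynomial.coeff_C, Polynomial.coeff_C_mul, Polynomial.coeff_X_pow,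
          Polynomial.coeff_X, Polynomial.coeff_add, mul_assoc] using h
      have e0 : q = b * t := by
        have h := congrArg (fun P => Polynomial.coeff P 0) hfg
        rw [hc0] at h
        simpa [Polynomial.coeff_C, Polynomial.coeff_C_mul, Polynomial.coeff_X_pow,
          Polynomial.coeff_X, Polynomial.coeff_add, mul_assoc] using h
      have key : (b*s)^2 = -(Polynomial.C r * q) := by
        have hthis : (a*s) * (b*t) = (a*t) * (b*s) := by ring
        rw [← e2, ← e0] at hthis
        have hat : a * t = -(b*s) := by linear_combination -e1
        rw [hat] at hthis
        linear_combination hthis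
      have hbne : b ≠ 0 := by
        intro h; rw [h] at e0; simp at e0; exact hqne e0
      have hsne : s ≠ 0 := by
        intro h; rw [h] at e2; simp at e2; exact hr e2
      have hbs : b * s ≠ 0 := mul_ne_zero hbne hsne
      have hdge : ((b*s)^2).natDegree = 2 * (b*s).natDegree := by
        rw [Polynomial.natDegree_pow, mul_comm]
      have hrhs : (-(Polynomial.C r * q)).natDegree = q.natDegree := by
        rw [Polynomial.natDegree_neg, Polynomial.natDegree_C_mul hr]
      rw [key, hrhs] at hdge
      obtain ⟨m, hm⟩ := hodd
      omega
  exact (UniqueFactorizationMonoid.irreducible_iff_prime).mp hirr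


open MvPolynomial

noncomputable def myEquiv (K : Type*) [Field K] :
    MvPolynomial (Fin 2) K ≃+* Polynomial (Polynomial K) :=
  ((renameEquiv K (Equiv.swap (0:Fin 2) 1)).toRingEquiv.trans
    (finSuccEquiv K 1).toRingEquiv).trans
    (Polynomial.mapEquiv ((renameEquiv K (Equiv.equivPUnit.{1,1} (Fin 1))).trans
      (pUnitAlgEquiv K)).toRingEquiv)

lemma myEquiv_X0 (K : Type*) [Field K] :
    myEquiv K (X 0) = Polynomial.C Polynomial.X := by
  have h1 : (X (1:Fin 2) : MvPolynomial (Fin 2) K) = X (Fin.succ 0) := rfl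
  simp [myEquiv, h1, finSuccEquiv_X_succ, eval₂_X]

lemma myEquiv_X1 (K : Type*) [Field K] :
    myEquiv K (X 1) = Polynomial.X := by
  have h1 : (X (1:Fin 2) : MvPolynomial (Fin 2) K) = X (Fin.succ 0) := rfl
  simp [myEquiv, h1, finSuccEquiv_X_zero]

lemma myEquiv_d (K : Type*) [Field K] :
    myEquiv K ((-4 : MvPolynomial (Fin 2) K) * X 0 ^ 3 - 27 * X 1 ^ 2)
      = Polynomial.C (Polynomial.C (-4:K) * Polynomial.X ^ 3)
        + Polynomial.C (Polynomial.C (-27:K)) * Polynomial.X ^ 2 := by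
  rw [map_sub, map_mul, map_mul, map_pow, map_pow, myEquiv_X0, myEquiv_X1,
    map_neg, map_ofNat, map_ofNat]
  simp only [map_neg, map_ofNat, map_mul, map_pow, Polynomial.C_neg, Polynomial.C_mul, Polynomial.C_pow]
  ring




/-- Divisibility lemma in `K[a,b]` (`a = X 0`, `b = X 1`) for `char K = p > 3`,
`p/2 < c < 2p/3`, `M = c - (p+1)/2`, `k ≥ 1`: if `A·d^k = B·w` where
`d = -4a³-27b²` and `w` corresponds to the singular vector `v_p`, then
`A = C·w` and `B = C·d^k` for some polynomial `C`. -/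
theorem stmt_13 (K : Type*) [Field K] (p : ℕ) [CharP K p] (hp : p.Prime) (h3 : 3 < p)
    (c M : ℕ) (hc1 : p < 2 * c) (hc2 : 3 * c < 2 * p) (hM : M = c - (p + 1) / 2)
    (k : ℕ) (hk : 1 ≤ k)
    (w d : MvPolynomial (Fin 2) K)
    (hw : w = X 0 ^ (2 * p - 3 * c) * X 1 *
        ∑ j ∈ Finset.range (M + 1),
          C ((M.choose j : K) * ((2 * j + 1 : ℕ) : K)⁻¹) *
            (-4 * X 0 ^ 3) ^ (M - j) * (-27 * X 1 ^ 2) ^ j)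
    (hd : d = -4 * X 0 ^ 3 - 27 * X 1 ^ 2)
    (A B : MvPolynomial (Fin 2) K)
    (hAB : A * d ^ k = B * w) :
    ∃ Cp : MvPolynomial (Fin 2) K, A = Cp * w ∧ B = Cp * d ^ k := by
  -- basic arithmetic
  have hpodd : Odd p := hp.odd_of_ne_two (by omega)
  obtain ⟨m, hm⟩ := hpodd
  have h2M1 : 2 * M + 1 < p := by omega
  -- nonzero constants
  have hcast : ∀ n : ℕ, 0 < n → n < p → ((n : K) ≠ 0) := by
    intro n h0 hnp h
    rw [CharP.cast_eq_zero_iff K p] at h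
    exact absurd (Nat.le_of_dvd h0 h) (by omega)
  have h2 : (2:K) ≠ 0 := by
    have := hcast 2 (by omega) (by omega); simpa using this
  have h3K : (3:K) ≠ 0 := by
    have := hcast 3 (by omega) (by omega); simpa using this
  have h108 : (108:K) ≠ 0 := by
    have e108 : (108:K) = 2^2*3^3 := by norm_num
    rw [e108]; exact mul_ne_zero (pow_ne_zero _ h2) (pow_ne_zero _ h3K)
  have h3n : (-3:K) ≠ 0 := neg_ne_zero.mpr h3K
  -- the scalar sum is nonzero
  have hsumne : (∑ j ∈ Finset.range (M+1),
      (M.choose j : K) * ((2 * j + 1 : ℕ) : K)⁻¹ * (108:K)^(M-j) * (-108:K)^j) ≠ 0 := by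
    set x : K := (2:K)⁻¹ with hx
    have hxi : ∀ i : ℕ, i ≤ M → x + i ≠ 0 := by
      intro i hi h
      have h2i : ((2*i+1 : ℕ) : K) ≠ 0 := hcast _ (by omega) (by omega)
      apply h2i
      have : ((2*i+1 : ℕ) : K) = (x + i) * 2 := by
        rw [hx]; push_cast; field_simp; ring
      rw [this, h, zero_mul]
    have hpf := pf_sum K M x hxi
    have hPne : (∏ i ∈ Finset.range (M+1), (x + (i:K))) ≠ 0 :=
      Finset.prod_ne_zero_iff.mpr (fun i hi => hxi i (by
        simpa [Nat.lt_succ_iff] using Finset.mem_range.mp hi))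
    have hfact : (Nat.factorial M : K) ≠ 0 := by
      intro h
      rw [CharP.cast_eq_zero_iff K p] at h
      exact absurd ((Nat.Prime.dvd_factorial hp).mp h) (by omega)
    have hSne : (∑ j ∈ Finset.range (M+1), (-1:K)^j * (M.choose j : K) * (x + j)⁻¹) ≠ 0 := by
      intro h
      rw [h, zero_mul] at hpf
      exact hfact hpf.symm
    -- rewrite the target sum
    have hre : (∑ j ∈ Finset.range (M+1),
        (M.choose j : K) * ((2 * j + 1 : ℕ) : K)⁻¹ * (108:K)^(M-j) * (-108:K)^j)
        = (108:K)^M * (2:K)⁻¹ * ∑ j ∈ Finset.range (M+1), (-1:K)^j * (M.choose j : K) * (x + j)⁻¹ := by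
      rw [Finset.mul_sum]
      refine Finset.sum_congr rfl fun j hj => ?_
      have hjM : j ≤ M := by simpa [Nat.lt_succ_iff] using Finset.mem_range.mp hj
      have h2j : ((2*j+1 : ℕ) : K) ≠ 0 := hcast _ (by omega) (by omega)
      have hxj : x + (j:K) = ((2*j+1 : ℕ):K) * 2⁻¹ := by
        rw [hx]; push_cast; field_simp; ring
      have hinv : (x + (j:K))⁻¹ = ((2*j+1 : ℕ):K)⁻¹ * 2 := by
        rw [hxj, mul_inv, inv_inv]
      rw [hinv]
      have hpow : (108:K)^(M-j) * (-108:K)^j = (108:K)^M * (-1)^j := by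
        rw [show (-108:K) = 108 * (-1) by ring, mul_pow, ← mul_assoc, ← pow_add]
        congr 2
        omega
      have h2' : (2:K)⁻¹ * 2 = 1 := inv_mul_cancel₀ h2
      linear_combination ((M.choose j : K) * ((2*j+1 : ℕ):K)⁻¹) * hpow
        - ((M.choose j : K) * ((2*j+1 : ℕ):K)⁻¹ * (108:K)^M * (-1:K)^j) * h2'
    rw [hre]
    exact mul_ne_zero (mul_ne_zero (pow_ne_zero _ h108) (inv_ne_zero h2)) hSne
  -- evaluation point
  set v : Fin 2 → K := fun i => if i = 0 then (-3:K) else 2 with hv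
  have hevd : eval v d = 0 := by
    rw [hd]
    simp [hv]
    norm_num
  have hevw : eval v w ≠ 0 := by
    rw [hw]
    rw [map_mul, map_mul, map_pow, map_sum, eval_X, eval_X]
    simp only [hv, if_pos rfl]
    norm_num
    push_cast at hsumne
    exact ⟨⟨fun hh => absurd hh h3K, h2⟩, hsumne⟩
  -- prime d
  have hprime : Prime d := by
    rw [hd, ← MulEquiv.prime_iff (myEquiv K).toMulEquiv]
    show Prime (myEquiv K ((-4 : MvPolynomial (Fin 2) K) * X 0 ^ 3 - 27 * X 1 ^ 2))
    rw [myEquiv_d]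
    have h4 : (-4:K) ≠ 0 := by
      rw [neg_ne_zero, show (4:K) = 2^2 by norm_num]
      exact pow_ne_zero _ h2
    have h27 : (-27:K) ≠ 0 := by
      rw [neg_ne_zero, show (27:K) = 3^3 by norm_num]
      exact pow_ne_zero _ h3K
    refine prime_quad K _ _ h27 ?_ ?_
    · rw [Polynomial.natDegree_C_mul_X_pow _ _ h4]
      exact ⟨1, rfl⟩
    · exact mul_ne_zero (Polynomial.C_ne_zero.mpr h4) (pow_ne_zero _ Polynomial.X_ne_zero)
  have hndvd : ¬ d ∣ w := by
    rintro ⟨u, hu⟩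
    exact hevw (by rw [hu, map_mul, hevd, zero_mul])
  have hdvd : d ^ k ∣ B * w := ⟨A, by linear_combination -hAB⟩
  have hBk : d ^ k ∣ B := hprime.pow_dvd_of_dvd_mul_right k hndvd hdvd
  obtain ⟨C0, hC0⟩ := hBk
  refine ⟨C0, ?_, by rw [hC0]; ring⟩
  have hfin : A * d ^ k = (C0 * w) * d ^ k := by rw [hAB, hC0]; ring
  exact mul_right_cancel₀ (pow_ne_zero k hprime.ne_zero) hfin
end

section
/- Let K be a field of characteristic p > 3 and c an integer with p/2 < c < 2p/3; set M := c - (p+1)/2. In R = K[b₊, b₋], let v₁ := q^{2c-p} and let v₂ := σ₂^{2p-3c} · σ₃ · Σ_{j=0}^{M} binom(M,j)(2j+1)⁻¹(-4σ₂³)^{M-j}(-27σ₃²)^{j}. Then the intersection of the principal ideals (v₁) ∩ (v₂) equals the principal ideal (v₁·v₂). Equivalently, v₁, v₂ is a regular sequence in R, i.e. v₂ is not a zero divisor in R/(v₁). -/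
open MvPolynomial

noncomputable section

/-! ### Auxiliary material -/

section Aux

variable {K : Type*} [Field K]

theorem aux_primeX0 : Prime (X 0 : MvPolynomial (Fin 2) K) := by
  rw [← MulEquiv.prime_iff (finSuccEquiv K 1).toMulEquiv]
  simpa [finSuccEquiv_X_zero] using (Polynomial.prime_X (R := MvPolynomial (Fin 1) K))

theorem aux_primeX1 : Prime (X 1 : MvPolynomial (Fin 2) K) := by
  have h := aux_primeX0 (K := K)
  rw [← MulEquiv.prime_iff (renameEquiv K (Equiv.swap (0 : Fin 2) 1)).toMulEquiv] at h
  simpa using h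

/-- The shear automorphism `X0 ↦ X0 + a·X1`, `X1 ↦ X1`. -/
def auxShear (a : K) : MvPolynomial (Fin 2) K ≃ₐ[K] MvPolynomial (Fin 2) K :=
  AlgEquiv.ofAlgHom (aeval ![X 0 + C a * X 1, X 1]) (aeval ![X 0 - C a * X 1, X 1])
    (by apply MvPolynomial.algHom_ext; intro i; fin_cases i <;> simp)
    (by apply MvPolynomial.algHom_ext; intro i; fin_cases i <;> simp)

theorem aux_prime_lin (a : K) : Prime (X 0 + C a * X 1 : MvPolynomial (Fin 2) K) := by
  have h := aux_primeX0 (K := K)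
  rw [← MulEquiv.prime_iff (auxShear a).toMulEquiv] at h
  simpa [auxShear] using h

/-- `F M x = ∑ (-1)^j C(M,j)/(x+j)`. -/
def auxF (M : ℕ) (x : K) : K :=
  ∑ j ∈ Finset.range (M + 1), (-1) ^ j * (M.choose j : K) * (x + j)⁻¹

theorem auxF_succ (M : ℕ) (x : K) : auxF (M + 1) x = auxF M x - auxF M (x + 1) := by
  unfold auxF
  rw [Finset.sum_range_succ']
  have h1 : ∀ j ∈ Finset.range (M + 1),
      (-1 : K) ^ (j + 1) * ((M + 1).choose (j + 1) : K) * (x + ((j + 1 : ℕ) : K))⁻¹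
      = (-((-1 : K) ^ j * (M.choose j : K) * ((x + 1) + (j : ℕ))⁻¹))
        + (-1 : K) ^ (j + 1) * (M.choose (j + 1) : K) * (x + ((j + 1 : ℕ) : K))⁻¹ := by
    intro j _
    rw [Nat.choose_succ_succ]
    push_cast
    ring
  rw [Finset.sum_congr rfl h1, Finset.sum_add_distrib]
  have h2 : ∑ j ∈ Finset.range (M + 1),
        (-1 : K) ^ (j + 1) * (M.choose (j + 1) : K) * (x + ((j + 1 : ℕ) : K))⁻¹
      = ∑ j ∈ Finset.range M,
        (-1 : K) ^ (j + 1) * (M.choose (j + 1) : K) * (x + ((j + 1 : ℕ) : K))⁻¹ := by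
    rw [Finset.sum_range_succ, Nat.choose_succ_self]
    simp
  have h3 : ∑ j ∈ Finset.range (M + 1), (-1 : K) ^ j * (M.choose j : K) * (x + (j : ℕ))⁻¹
      = (∑ j ∈ Finset.range M,
          (-1 : K) ^ (j + 1) * (M.choose (j + 1) : K) * (x + ((j + 1 : ℕ) : K))⁻¹)
        + (-1 : K) ^ 0 * (M.choose 0 : K) * (x + ((0 : ℕ) : K))⁻¹ := Finset.sum_range_succ' _ _
  rw [h2, Finset.sum_neg_distrib, h3]
  push_cast
  simp only [Nat.choose_zero_right]
  ring

theorem aux_key_sum (M : ℕ) : ∀ x : K, (∀ i : ℕ, i ≤ M → x + i ≠ 0) →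
    auxF M x * (∏ i ∈ Finset.range (M + 1), (x + i)) = (M.factorial : K) := by
  induction M with
  | zero =>
    intro x h
    have hx : x ≠ 0 := by simpa using h 0 le_rfl
    simp [auxF, inv_mul_cancel₀ hx]
  | succ M ih =>
    intro x h
    have hx : x ≠ 0 := by simpa using h 0 (by omega)
    have hP1 : (∏ i ∈ Finset.range (M + 2), (x + i))
        = (∏ i ∈ Finset.range (M + 1), (x + i)) * (x + ((M + 1 : ℕ) : K)) := by
      rw [Finset.prod_range_succ]
    have hP2' : (∏ i ∈ Finset.range (M + 2), (x + i))
        = (∏ i ∈ Finset.range (M + 1), ((x + 1) + i)) * x := by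
      rw [Finset.prod_range_succ']
      push_cast
      simp only [add_zero]
      congr 1
      apply Finset.prod_congr rfl
      intro i _
      ring
    have ih1 := ih x (fun i hi => h i (by omega))
    have ih2 : auxF M (x + 1) * (∏ i ∈ Finset.range (M + 1), ((x + 1) + i))
        = (M.factorial : K) := by
      apply ih
      intro i hi
      have := h (i + 1) (by omega)
      push_cast at this
      ring_nf at this ⊢
      exact this
    calc auxF (M + 1) x * (∏ i ∈ Finset.range (M + 2), (x + i))
        = (auxF M x * ∏ i ∈ Finset.range (M + 1), (x + i)) * (x + ((M + 1 : ℕ) : K))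
          - (auxF M (x + 1) * ∏ i ∈ Finset.range (M + 1), ((x + 1) + i)) * x := by
          rw [auxF_succ, sub_mul]
          nth_rewrite 1 [hP1]
          nth_rewrite 1 [hP2']
          ring
      _ = (M.factorial : K) * (x + ((M + 1 : ℕ) : K)) - (M.factorial : K) * x := by
          rw [ih1, ih2]
      _ = ((M + 1).factorial : K) := by rw [Nat.factorial_succ]; push_cast; ring

theorem aux_Sprime_ne (M : ℕ) (h2 : (2 : K) ≠ 0) (hfac : (M.factorial : K) ≠ 0)
    (hodd : ∀ j, j ≤ M → ((2 * j + 1 : ℕ) : K) ≠ 0) :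
    (∑ j ∈ Finset.range (M + 1),
      (M.choose j : K) * ((2 * j + 1 : ℕ) : K)⁻¹ * (-1 : K) ^ j) ≠ 0 := by
  have hx : ∀ i : ℕ, i ≤ M → (2 : K)⁻¹ + i ≠ 0 := by
    intro i hi h0
    apply hodd i hi
    have : ((2 * i + 1 : ℕ) : K) = 2 * ((2 : K)⁻¹ + i) := by
      push_cast
      field_simp
      ring
    rw [this, h0, mul_zero]
  have hF : auxF M (2⁻¹ : K) ≠ 0 := by
    intro h0
    exact hfac (by rw [← aux_key_sum M (2⁻¹ : K) hx, h0, zero_mul])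
  have hFS : auxF M (2⁻¹ : K)
      = 2 * ∑ j ∈ Finset.range (M + 1),
          (M.choose j : K) * ((2 * j + 1 : ℕ) : K)⁻¹ * (-1 : K) ^ j := by
    rw [auxF, Finset.mul_sum]
    apply Finset.sum_congr rfl
    intro j _
    have h1 : ((2 : K)⁻¹ + j) = 2⁻¹ * ((2 * j + 1 : ℕ) : K) := by
      push_cast
      field_simp
      ring
    rw [h1, mul_inv, inv_inv]
    ring
  intro h0
  rw [hFS, h0, mul_zero] at hF
  exact hF rfl

theorem aux_phC (φ : MvPolynomial (Fin 2) K →ₐ[K] Polynomial K) (r : K) :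
    φ (MvPolynomial.C r) = Polynomial.C r := by
  rw [← MvPolynomial.algebraMap_eq, AlgHom.commutes, Polynomial.algebraMap_eq]

theorem aux_phi_v2 (φ : MvPolynomial (Fin 2) K →ₐ[K] Polynomial K) {α β : K}
    (h2 : φ (sig2 K) = Polynomial.C α * Polynomial.X ^ 2)
    (h3 : φ (sig3 K) = Polynomial.C β * Polynomial.X ^ 3)
    (e M : ℕ) :
    φ (sig2 K ^ e * sig3 K * ∑ j ∈ Finset.range (M + 1),
        MvPolynomial.C ((M.choose j : K) * ((2 * j + 1 : ℕ) : K)⁻¹) *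
          (-4 * sig2 K ^ 3) ^ (M - j) * (-27 * sig3 K ^ 2) ^ j)
    = Polynomial.C (α ^ e * β * ∑ j ∈ Finset.range (M + 1),
          (M.choose j : K) * ((2 * j + 1 : ℕ) : K)⁻¹ * (-4 * α ^ 3) ^ (M - j)
            * (-27 * β ^ 2) ^ j)
        * Polynomial.X ^ (2 * e + 3 + 6 * M) := by
  have hA : φ (-4 * sig2 K ^ 3) = Polynomial.C (-4 * α ^ 3) * Polynomial.X ^ 6 := by
    rw [map_mul, map_pow, h2]
    simp only [map_neg, map_mul, map_ofNat, map_pow]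
    ring
  have hB : φ (-27 * sig3 K ^ 2) = Polynomial.C (-27 * β ^ 2) * Polynomial.X ^ 6 := by
    rw [map_mul, map_pow, h3]
    simp only [map_neg, map_mul, map_ofNat, map_pow]
    ring
  rw [map_mul, map_mul, map_sum, map_pow, h2, h3]
  have hterm : ∀ j ∈ Finset.range (M + 1),
      φ (MvPolynomial.C ((M.choose j : K) * ((2 * j + 1 : ℕ) : K)⁻¹) *
          (-4 * sig2 K ^ 3) ^ (M - j) * (-27 * sig3 K ^ 2) ^ j)
      = Polynomial.C ((M.choose j : K) * ((2 * j + 1 : ℕ) : K)⁻¹ * (-4 * α ^ 3) ^ (M - j)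
          * (-27 * β ^ 2) ^ j) * Polynomial.X ^ (6 * M) := by
    intro j hj
    have hj' : j ≤ M := by simpa [Nat.lt_succ_iff] using hj
    rw [map_mul, map_mul, map_pow, map_pow, hA, hB, aux_phC]
    have hexp : 6 * M = 6 * (M - j) + 6 * j := by omega
    rw [hexp]
    simp only [map_mul, map_pow]
    ring
  rw [Finset.sum_congr rfl hterm, ← Finset.sum_mul, ← map_sum Polynomial.C]
  simp only [map_mul, map_pow]
  ring

theorem aux_not_dvd (φ : MvPolynomial (Fin 2) K →ₐ[K] Polynomial K)
    (l f : MvPolynomial (Fin 2) K) (hl : φ l = 0) (hf : φ f ≠ 0) : ¬ l ∣ f := by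
  rintro ⟨g, rfl⟩
  exact hf (by rw [map_mul, hl, zero_mul])

end Aux

/-- For `p/2 < c < 2p/3`, the singular vectors `v₁ = q^{2c-p}` and `v₂ = v_p` form a
regular sequence in `S𝔥* = K[b₊,b₋]`: the intersection of the principal ideals they
generate is the principal ideal generated by their product, equivalently `v₂` is not a
zero divisor modulo `v₁`.  Hence `L_{1,c}(Triv)` is a complete intersection. -/
theorem stmt_14 (K : Type*) [Field K] (p : ℕ) [CharP K p] (hp : p.Prime) (h3 : 3 < p)
    (c M : ℕ) (hc1 : p < 2 * c) (hc2 : 3 * c < 2 * p) (hM : M = c - (p + 1) / 2)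
    (v1 v2 : MvPolynomial (Fin 2) K)
    (hv1 : v1 = qq K ^ (2 * c - p))
    (hv2 : v2 = sig2 K ^ (2 * p - 3 * c) * sig3 K *
        ∑ j ∈ Finset.range (M + 1),
          C ((M.choose j : K) * ((2 * j + 1 : ℕ) : K)⁻¹) *
            (-4 * sig2 K ^ 3) ^ (M - j) * (-27 * sig3 K ^ 2) ^ j) :
    Ideal.span {v1} ⊓ Ideal.span {v2} = Ideal.span {v1 * v2} ∧
    ∀ x : MvPolynomial (Fin 2) K, v2 * x ∈ Ideal.span {v1} → x ∈ Ideal.span {v1} := by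
  -- arithmetic preliminaries
  have hpo : p % 2 = 1 := Nat.odd_iff.mp (hp.odd_of_ne_two (by omega))
  have h2M : 2 * M + 1 < p := by omega
  have hcast : ∀ m : ℕ, 0 < m → m < p → (m : K) ≠ 0 := by
    intro m h1 h2 h0
    have hd := (CharP.cast_eq_zero_iff K p m).mp h0
    have := Nat.le_of_dvd h1 hd
    omega
  have h2K : (2 : K) ≠ 0 := by
    have := hcast 2 (by omega) (by omega); exact_mod_cast this
  have h3K : (3 : K) ≠ 0 := by
    have := hcast 3 (by omega) (by omega); exact_mod_cast this
  have h4K : (4 : K) ≠ 0 := by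
    have : (4 : K) = 2 ^ 2 := by norm_num
    rw [this]; exact pow_ne_zero _ h2K
  have h8K : (8 : K) ≠ 0 := by
    have : (8 : K) = 2 ^ 3 := by norm_num
    rw [this]; exact pow_ne_zero _ h2K
  have h12K : (12 : K) ≠ 0 := by
    have : (12 : K) = 2 ^ 2 * 3 := by norm_num
    rw [this]; exact mul_ne_zero (pow_ne_zero _ h2K) h3K
  have h108K : (108 : K) ≠ 0 := by
    have : (108 : K) = 2 ^ 2 * 3 ^ 3 := by norm_num
    rw [this]; exact mul_ne_zero (pow_ne_zero _ h2K) (pow_ne_zero _ h3K)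
  have hfacK : (M.factorial : K) ≠ 0 := by
    rw [Ne, CharP.cast_eq_zero_iff K p, Nat.Prime.dvd_factorial hp]
    omega
  have hoddK : ∀ j, j ≤ M → ((2 * j + 1 : ℕ) : K) ≠ 0 := by
    intro j hj
    exact hcast _ (by omega) (by omega)
  have hS := aux_Sprime_ne M h2K hfacK hoddK
  set e : ℕ := 2 * p - 3 * c with he
  set n : ℕ := 2 * c - p with hn
  -- the three evaluation maps
  set ph1 : MvPolynomial (Fin 2) K →ₐ[K] Polynomial K := aeval ![Polynomial.X, 0] with hph1
  set ph2 : MvPolynomial (Fin 2) K →ₐ[K] Polynomial K :=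
    aeval ![Polynomial.X, Polynomial.X] with hph2
  set ph3 : MvPolynomial (Fin 2) K →ₐ[K] Polynomial K :=
    aeval ![Polynomial.X, -Polynomial.X] with hph3
  -- a generic nonvanishing lemma for the image of v2
  have himg : ∀ (φ : MvPolynomial (Fin 2) K →ₐ[K] Polynomial K) (α β : K), α ≠ 0 → β ≠ 0 →
      4 * α ^ 3 + 27 * β ^ 2 = 0 →
      φ (sig2 K) = Polynomial.C α * Polynomial.X ^ 2 →
      φ (sig3 K) = Polynomial.C β * Polynomial.X ^ 3 → φ v2 ≠ 0 := by
    intro φ α β hα hβ hrel hs2 hs3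
    rw [hv2, aux_phi_v2 φ hs2 hs3 e M]
    have hT : (∑ j ∈ Finset.range (M + 1),
          (M.choose j : K) * ((2 * j + 1 : ℕ) : K)⁻¹ * (-4 * α ^ 3) ^ (M - j)
            * (-27 * β ^ 2) ^ j)
        = (-4 * α ^ 3) ^ M * ∑ j ∈ Finset.range (M + 1),
            (M.choose j : K) * ((2 * j + 1 : ℕ) : K)⁻¹ * (-1 : K) ^ j := by
      rw [Finset.mul_sum]
      apply Finset.sum_congr rfl
      intro j hj
      have hj' : j ≤ M := by simpa [Nat.lt_succ_iff] using hj
      have hb : (-27 * β ^ 2 : K) = -(-4 * α ^ 3) := by linear_combination -hrel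
      rw [hb, neg_pow]
      rw [show (M.choose j : K) * ((2 * j + 1 : ℕ) : K)⁻¹ * (-4 * α ^ 3) ^ (M - j) *
            ((-1 : K) ^ j * (-4 * α ^ 3) ^ j)
          = ((-4 * α ^ 3) ^ (M - j) * (-4 * α ^ 3) ^ j) *
            ((M.choose j : K) * ((2 * j + 1 : ℕ) : K)⁻¹ * (-1 : K) ^ j) from by ring]
      rw [pow_sub_mul_pow _ hj']
    have ha : (-4 * α ^ 3 : K) ≠ 0 :=
      mul_ne_zero (neg_ne_zero.mpr h4K) (pow_ne_zero _ hα)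
    have hγ : (α ^ e * β * ∑ j ∈ Finset.range (M + 1),
          (M.choose j : K) * ((2 * j + 1 : ℕ) : K)⁻¹ * (-4 * α ^ 3) ^ (M - j)
            * (-27 * β ^ 2) ^ j) ≠ 0 := by
      rw [hT]
      exact mul_ne_zero (mul_ne_zero (pow_ne_zero _ hα) hβ)
        (mul_ne_zero (pow_ne_zero _ ha) hS)
    exact mul_ne_zero (Polynomial.C_ne_zero.mpr hγ)
      (pow_ne_zero _ Polynomial.X_ne_zero)
  -- nonvanishing of v2 along the three lines
  have hv2ne1 : ph1 v2 ≠ 0 := by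
    apply himg ph1 (-(12 : K)⁻¹) (-(108 : K)⁻¹)
      (neg_ne_zero.mpr (inv_ne_zero h12K)) (neg_ne_zero.mpr (inv_ne_zero h108K))
    · field_simp
      norm_num
    · simp [hph1, sig2, bp, bm, Polynomial.smul_eq_C_mul, map_neg, map_inv₀, map_mul, map_ofNat]
    · simp [hph1, sig3, bp, bm, Polynomial.smul_eq_C_mul, map_neg, map_inv₀, map_mul, map_ofNat]
  have hv2ne2 : ph2 v2 ≠ 0 := by
    apply himg ph2 ((12 : K)⁻¹ * (-4)) ((108 : K)⁻¹ * 8)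
      (mul_ne_zero (inv_ne_zero h12K) (neg_ne_zero.mpr h4K))
      (mul_ne_zero (inv_ne_zero h108K) h8K)
    · field_simp
      norm_num
    · simp [hph2, sig2, bp, bm, Polynomial.smul_eq_C_mul, map_neg, map_inv₀, map_mul, map_ofNat]
      ring
    · simp [hph2, sig3, bp, bm, Polynomial.smul_eq_C_mul, map_neg, map_inv₀, map_mul, map_ofNat]
      ring
  have hv2ne3 : ph3 v2 ≠ 0 := by
    apply himg ph3 ((12 : K)⁻¹ * (-4)) ((108 : K)⁻¹ * 8)
      (mul_ne_zero (inv_ne_zero h12K) (neg_ne_zero.mpr h4K))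
      (mul_ne_zero (inv_ne_zero h108K) h8K)
    · field_simp
      norm_num
    · simp [hph3, sig2, bp, bm, Polynomial.smul_eq_C_mul, map_neg, map_inv₀, map_mul, map_ofNat]
      ring
    · simp [hph3, sig3, bp, bm, Polynomial.smul_eq_C_mul, map_neg, map_inv₀, map_mul, map_ofNat]
      ring
  -- the three linear factors
  set l1 : MvPolynomial (Fin 2) K := X 1 with hl1
  set l2 : MvPolynomial (Fin 2) K := X 0 - X 1 with hl2
  set l3 : MvPolynomial (Fin 2) K := X 0 + X 1 with hl3
  have P1 : Prime l1 := aux_primeX1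
  have P2 : Prime l2 := by
    have h := aux_prime_lin (K := K) (-1)
    have heq : (X 0 + C (-1 : K) * X 1 : MvPolynomial (Fin 2) K) = l2 := by
      rw [hl2, map_neg, map_one]; ring
    rwa [heq] at h
  have P3 : Prime l3 := by
    have h := aux_prime_lin (K := K) 1
    have heq : (X 0 + C (1 : K) * X 1 : MvPolynomial (Fin 2) K) = l3 := by
      rw [hl3, map_one]; ring
    rwa [heq] at h
  -- non-divisibility facts
  have hnd1 : ¬ l1 ∣ v2 := aux_not_dvd ph1 l1 v2 (by simp [hph1, hl1]) hv2ne1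
  have hnd2 : ¬ l2 ∣ v2 := aux_not_dvd ph2 l2 v2 (by simp [hph2, hl2]) hv2ne2
  have hnd3 : ¬ l3 ∣ v2 := aux_not_dvd ph3 l3 v2 (by simp [hph3, hl3]) hv2ne3
  have hnd21 : ¬ l2 ∣ l1 := by
    apply aux_not_dvd ph2 l2 l1 (by simp [hph2, hl2])
    simp [hph2, hl1, Polynomial.X_ne_zero]
  have hnd31 : ¬ l3 ∣ l1 := by
    apply aux_not_dvd ph3 l3 l1 (by simp [hph3, hl3])
    simp [hph3, hl1, Polynomial.X_ne_zero]
  have hnd32 : ¬ l3 ∣ l2 := by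
    apply aux_not_dvd ph3 l3 l2 (by simp [hph3, hl3])
    have : ph3 l2 = Polynomial.C (2 : K) * Polynomial.X := by
      simp [hph3, hl2, map_ofNat]
      ring
    rw [this]
    exact mul_ne_zero (Polynomial.C_ne_zero.mpr h2K) Polynomial.X_ne_zero
  -- factorization of q
  have hq : qq K = C (4⁻¹ : K) * (l1 * l2 * l3) := by
    rw [qq, bp, bm, MvPolynomial.smul_eq_C_mul, hl1, hl2, hl3]
    ring
  -- key divisibility statement
  have key : ∀ x : MvPolynomial (Fin 2) K, v1 ∣ v2 * x → v1 ∣ x := by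
    intro x hdvd
    have hL2 : v1 = (l1 ^ n * l2 ^ n * l3 ^ n) * (C (4⁻¹ : K)) ^ n := by
      rw [hv1, hq, mul_pow, mul_pow, mul_pow]
      ring
    have hLd : (l1 ^ n * l2 ^ n * l3 ^ n) ∣ v2 * x := dvd_trans ⟨_, hL2⟩ hdvd
    have d1 : l1 ^ n ∣ v2 * x := dvd_trans ⟨l2 ^ n * l3 ^ n, by ring⟩ hLd
    have e1 : l1 ^ n ∣ x := P1.pow_dvd_of_dvd_mul_left n hnd1 d1
    obtain ⟨x1, hx1⟩ := e1
    have d2 : l2 ^ n ∣ (v2 * l1 ^ n) * x1 := by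
      have : (v2 * l1 ^ n) * x1 = v2 * x := by rw [hx1]; ring
      rw [this]
      exact dvd_trans ⟨l1 ^ n * l3 ^ n, by ring⟩ hLd
    have hnd2' : ¬ l2 ∣ v2 * l1 ^ n := by
      intro h
      rcases (Prime.dvd_mul P2).mp h with h' | h'
      · exact hnd2 h'
      · exact hnd21 (P2.dvd_of_dvd_pow h')
    have e2 : l2 ^ n ∣ x1 := P2.pow_dvd_of_dvd_mul_left n hnd2' d2
    obtain ⟨x2, hx2⟩ := e2
    have d3 : l3 ^ n ∣ (v2 * (l1 ^ n * l2 ^ n)) * x2 := by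
      have : (v2 * (l1 ^ n * l2 ^ n)) * x2 = v2 * x := by rw [hx1, hx2]; ring
      rw [this]
      exact dvd_trans ⟨l1 ^ n * l2 ^ n, by ring⟩ hLd
    have hnd3' : ¬ l3 ∣ v2 * (l1 ^ n * l2 ^ n) := by
      intro h
      rcases (Prime.dvd_mul P3).mp h with h' | h'
      · exact hnd3 h'
      · rcases (Prime.dvd_mul P3).mp h' with h'' | h''
        · exact hnd31 (P3.dvd_of_dvd_pow h'')
        · exact hnd32 (P3.dvd_of_dvd_pow h'')
    have e3 : l3 ^ n ∣ x2 := P3.pow_dvd_of_dvd_mul_left n hnd3' d3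
    obtain ⟨x3, hx3⟩ := e3
    have hLv1 : v1 ∣ l1 ^ n * l2 ^ n * l3 ^ n := by
      refine ⟨(C (4 : K)) ^ n, ?_⟩
      have hone : (C (4⁻¹ : K) : MvPolynomial (Fin 2) K) ^ n * (C (4 : K)) ^ n = 1 := by
        rw [← mul_pow, ← map_mul, inv_mul_cancel₀ h4K, map_one, one_pow]
      calc l1 ^ n * l2 ^ n * l3 ^ n
          = l1 ^ n * l2 ^ n * l3 ^ n * ((C (4⁻¹ : K)) ^ n * (C (4 : K)) ^ n) := by
            rw [hone, mul_one]
        _ = l1 ^ n * l2 ^ n * l3 ^ n * C (4⁻¹ : K) ^ n * C (4 : K) ^ n := by ring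
        _ = v1 * C (4 : K) ^ n := by rw [hL2]
    refine dvd_trans hLv1 ⟨x3, ?_⟩
    rw [hx1, hx2, hx3]
    ring
  constructor
  · apply le_antisymm
    · intro y hy
      rw [Ideal.mem_inf] at hy
      obtain ⟨hy1, hy2⟩ := hy
      rw [Ideal.mem_span_singleton] at hy1 hy2 ⊢
      obtain ⟨z, rfl⟩ := hy2
      obtain ⟨w, rfl⟩ := key z hy1
      exact ⟨w, by ring⟩
    · apply le_inf <;> rw [Ideal.span_singleton_le_span_singleton]
      · exact dvd_mul_right _ _
      · exact dvd_mul_left _ _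
  · intro x hx
    rw [Ideal.mem_span_singleton] at hx ⊢
    exact key x hx

end
end
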